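/- Let A be the k-algebra generated by E, F, K with relations E^n = α, F^n = β (α, β ∈ k), K^N = κ, EF − FE = η(K^{−m} − K^m), KE = θEK, KF = θ^{−1}FK, where θ has order N = nm and q = θ^m has order n, η ≠ 0. Suppose {E^i F^j K^l : 0 ≤ i,j < n, 0 ≤ l < N} is a k-basis of A. Then the Casimir element C = EF − (η/(q−1))(K^m + qK^{−m}) satisfies the degree-n polynomial f(t) = ∏_{i=0}^{n−1}(t + η' D(θ^i ρ)) − αβ over k, where η' = η/(q−1), D(ζ) = ζ^{−m} + qζ^m, and ρ is any fixed N-th root of κ; moreover no polynomial of degree < n annihilates C. -/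

import Mathlib

/-!
Put `z = K ^ m` and let `C` be the Casimir element. `C` commutes with `E`, `F` and `K`, and the
relations give `F ^ (j + 1) E ^ (j + 1) = F ^ j E ^ j (C + η' q ^ (j + 1) z + η' q ^ (-j) z⁻¹)`,
so `α β = F ^ n E ^ n` is a product of `n` factors in the commuting elements `C` and `z`. As a
polynomial in `z` (using `z⁻¹ = κ⁻¹ z ^ (n - 1)`) this product is invariant under `z ↦ q z`,
hence a polynomial in `z ^ n = κ = (ρ ^ m) ^ n`; so `z` may be replaced by the scalar `ρ ^ m`,
which gives `∏ i, (C + η' D(θ ^ i ρ)) = α β`.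

For minimality, `E ^ j * F ^ j * C ≡ E ^ (j + 1) * F ^ (j + 1)` modulo the span of the
`E ^ i * F ^ i * K ^ l` with `i ≤ j`, so `C ^ d ≡ E ^ d * F ^ d` modulo the span of those with
`i < d`, which does not contain the basis vector `E ^ d * F ^ d` when `d < n`.
-/

open Polynomial

section SkewCommute

variable {k A : Type*} [CommSemiring k] [Semiring A] [Algebra k A] {x y : A} {c : k}

theorem pow_mul_eq_smul_mul_pow (h : x * y = c • (y * x)) (j : ℕ) :
    x ^ j * y = c ^ j • (y * x ^ j) := by
  induction j with
  | zero => simp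
  | succ j ih =>
    rw [pow_succ, mul_assoc, h, Algebra.mul_smul_comm, ← mul_assoc, ih,
      Algebra.smul_mul_assoc, smul_smul, mul_assoc, ← pow_succ, ← pow_succ']

theorem mul_pow_eq_smul_pow_mul (h : x * y = c • (y * x)) (j : ℕ) :
    x * y ^ j = c ^ j • (y ^ j * x) := by
  induction j with
  | zero => simp
  | succ j ih =>
    rw [pow_succ, ← mul_assoc, ih, Algebra.smul_mul_assoc, mul_assoc, h,
      Algebra.mul_smul_comm, smul_smul, ← mul_assoc, ← pow_succ]

theorem Units.val_pow_mul_eq_smul_mul {K : Aˣ} (h : ↑K * y = c • (y * ↑K)) (m : ℕ) :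
    ↑(K ^ m) * y = c ^ m • (y * ↑(K ^ m)) := by
  rw [Units.val_pow_eq_pow_val]
  exact pow_mul_eq_smul_mul_pow h m

end SkewCommute

theorem Units.inv_mul_eq_smul_mul_inv {k A : Type*} [Field k] [Ring A] [Algebra k A]
    {u : Aˣ} {x : A} {c : k} (hc : c ≠ 0) (h : ↑u * x = c • (x * ↑u)) :
    ↑u⁻¹ * x = c⁻¹ • (x * ↑u⁻¹) := by
  have : x * ↑u⁻¹ = c • (↑u⁻¹ * x) := by
    calc x * ↑u⁻¹ = ↑u⁻¹ * (↑u * x) * ↑u⁻¹ := by simp [← mul_assoc]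
      _ = c • (↑u⁻¹ * x) := by simp [h, mul_assoc]
  rw [this, smul_smul, inv_mul_cancel₀ hc, one_smul]

theorem Finset.prod_range_add_one_of_eq {M : Type*} [CommMonoid M] {f : ℕ → M} {n : ℕ}
    (h : f n = f 0) : ∏ j ∈ range n, f (j + 1) = ∏ j ∈ range n, f j := by
  cases n with
  | zero => simp
  | succ n => rw [prod_range_succ, prod_range_succ' f, h]

theorem Polynomial.coeff_eq_zero_of_comp_C_mul_X_eq_self {R : Type*} [CommRing R] [IsDomain R]
    {P : R[X]} {a : R} (h : P.comp (C a * X) = P) {d : ℕ} (hd : a ^ d ≠ 1) : P.coeff d = 0 := by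
  have : P.coeff d * (a ^ d - 1) = 0 := by
    rw [mul_sub, mul_one, ← comp_C_mul_X_coeff, h, sub_self]
  exact (mul_eq_zero.mp this).resolve_right (sub_ne_zero.mpr hd)

theorem Polynomial.eval₂_eq_eval₂_of_pow_eq {R S : Type*} [Semiring R] [Semiring S] (f : R →+* S)
    {P : R[X]} {n : ℕ} (hP : ∀ d, ¬ n ∣ d → P.coeff d = 0) {x y : S} (h : x ^ n = y ^ n) :
    P.eval₂ f x = P.eval₂ f y := by
  simp only [eval₂_eq_sum_range]
  refine Finset.sum_congr rfl fun d _ => ?_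
  by_cases hd : n ∣ d
  · obtain ⟨e, rfl⟩ := hd
    rw [pow_mul, pow_mul, h]
  · simp [hP d hd]

theorem Units.exists_val_zpow_eq_smul_pow {k A : Type*} [Field k] [Ring A] [Algebra k A]
    {K : Aˣ} {N : ℕ} (hN : 0 < N) {κ : kˣ} (hK : (K : A) ^ N = (κ : k) • 1) (l : ℤ) :
    ∃ c : k, ∃ r < N, ((K ^ l : Aˣ) : A) = c • (K : A) ^ r := by
  have hKN : K ^ N = Units.map (algebraMap k A).toMonoidHom κ := by
    ext; simp [hK, Algebra.algebraMap_eq_smul_one]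
  have hr : 0 ≤ l % N := Int.emod_nonneg l (by omega)
  have hrN : l % N < N := Int.emod_lt_of_pos l (by omega)
  have hl : K ^ l = (K ^ N) ^ (l / N) * K ^ (l % N).toNat := by
    rw [← zpow_natCast, ← zpow_mul, ← zpow_natCast K, Int.toNat_of_nonneg hr, ← zpow_add,
      mul_comm, Int.ediv_mul_add_emod]
  refine ⟨((κ ^ (l / N) : kˣ) : k), (l % N).toNat, by omega, ?_⟩
  rw [hl, hKN, ← map_zpow, Units.val_mul, Units.coe_map, Units.val_pow_eq_pow_val,
    Algebra.smul_def]
  rfl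

section Filtration

variable {k A : Type*} [Field k] [Ring A] [Algebra k A] {M : ℕ → Submodule k A} {x : ℕ → A}
  {c : A}

theorem pow_sub_mem_of_mul_sub_mem (hx : x 0 = 1) (hmul : ∀ j, ∀ y ∈ M j, y * c ∈ M (j + 1))
    (hstep : ∀ j, x j * c - x (j + 1) ∈ M (j + 1)) (j : ℕ) : c ^ j - x j ∈ M j := by
  induction j with
  | zero => simp [hx]
  | succ j ih =>
    have : c ^ (j + 1) - x (j + 1) = (c ^ j - x j) * c + (x j * c - x (j + 1)) := by
      rw [pow_succ]; noncomm_ring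
    rw [this]
    exact add_mem (hmul j _ ih) (hstep j)

theorem aeval_ne_zero_of_pow_sub_mem (hM : Monotone M) (hpow : ∀ j, c ^ j - x j ∈ M j)
    (hx : ∀ i j, i < j → x i ∈ M j) {g : k[X]} (hg : g ≠ 0)
    (hxg : x g.natDegree ∉ M g.natDegree) : aeval c g ≠ 0 := by
  set d := g.natDegree
  have hpow_mem (i : ℕ) (hi : i < d) : c ^ i ∈ M d := by
    simpa using add_mem (hM hi.le (hpow i)) (hx i d hi)
  have hrest : aeval c g - g.leadingCoeff • x d ∈ M d := by
    rw [aeval_eq_sum_range, Finset.sum_range_succ, add_sub_assoc, coeff_natDegree, ← smul_sub]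
    exact add_mem (Submodule.sum_mem _ fun i hi => Submodule.smul_mem _ _
      (hpow_mem i (Finset.mem_range.mp hi))) (Submodule.smul_mem _ _ (hpow d))
  intro h0
  rw [h0, zero_sub, neg_mem_iff,
    Submodule.smul_mem_iff _ (leadingCoeff_ne_zero.mpr hg)] at hrest
  exact hxg hrest

end Filtration

section Casimir

variable {k A : Type*} [Field k] [Ring A] [Algebra k A]

def casimir (η' q : k) (E F : A) (z : Aˣ) : A :=
  E * F - η' • ((z : A) + q • (↑z⁻¹ : A))

variable {η' q : k} {E F : A} {z : Aˣ}

theorem casimir_swap (hEF : E * F - F * E = (η' * (q - 1)) • ((↑z⁻¹ : A) - z)) :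
    casimir η' q F E z⁻¹ = casimir η' q E F z := by
  rw [casimir, casimir, inv_inv]
  linear_combination (norm := module) -hEF

theorem commute_casimir_of_mul_eq_smul {K : A} {c : k} (hc : c ≠ 0)
    (hKE : K * E = c • (E * K)) (hKF : K * F = c⁻¹ • (F * K)) (hKz : Commute K z) :
    Commute (casimir η' q E F z) K := by
  have hKEF : Commute (E * F) K := by
    simp only [Commute, SemiconjBy, ← mul_assoc, hKE]
    simp only [mul_assoc, hKF, Algebra.mul_smul_comm, Algebra.smul_mul_assoc, smul_smul,
      mul_inv_cancel₀ hc, one_smul]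
  exact hKEF.sub_left ((hKz.symm.add_left (hKz.units_inv_right.symm.smul_left q)).smul_left η')

variable (hq : q ≠ 0) (hEF : E * F - F * E = (η' * (q - 1)) • ((↑z⁻¹ : A) - z))
include hq hEF

theorem commute_casimir_right (hzF : ↑z * F = q⁻¹ • (F * ↑z)) :
    Commute (casimir η' q E F z) F := by
  have hwF : ↑z⁻¹ * F = q • (F * ↑z⁻¹) := by
    simpa using Units.inv_mul_eq_smul_mul_inv (inv_ne_zero hq) hzF
  have hFE : F * E = E * F - (η' * (q - 1)) • ((↑z⁻¹ : A) - z) := by rw [← hEF]; abel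
  simp only [Commute, SemiconjBy, casimir, sub_mul, mul_sub, add_mul, mul_add,
    Algebra.smul_mul_assoc, Algebra.mul_smul_comm, smul_sub, smul_add, smul_smul, mul_assoc,
    hzF, hwF, ← mul_assoc F E, hFE]
  match_scalars <;> field_simp <;> ring

theorem pow_succ_mul_pow_succ (hzF : ↑z * F = q⁻¹ • (F * ↑z)) (j : ℕ) :
    E ^ (j + 1) * F ^ (j + 1) =
      E ^ j * F ^ j *
        (casimir η' q E F z + (η' * q⁻¹ ^ j) • (z : A) + (η' * q ^ (j + 1)) • (↑z⁻¹ : A)) := by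
  have hwF : ↑z⁻¹ * F = q • (F * ↑z⁻¹) := by
    simpa using Units.inv_mul_eq_smul_mul_inv (inv_ne_zero hq) hzF
  have hCF := (commute_casimir_right hq hEF hzF).pow_right j
  have hEF_eq : E * F = casimir η' q E F z + η' • ((z : A) + q • (↑z⁻¹ : A)) := by
    rw [casimir]; abel
  calc E ^ (j + 1) * F ^ (j + 1) = E ^ j * ((E * F) * F ^ j) := by
        rw [pow_succ, pow_succ']; simp only [mul_assoc]
    _ = _ := by
        rw [hEF_eq]
        simp only [add_mul, mul_add, Algebra.smul_mul_assoc, Algebra.mul_smul_comm,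
          hCF.eq, mul_pow_eq_smul_pow_mul hzF, mul_pow_eq_smul_pow_mul hwF, smul_smul, mul_assoc]
        match_scalars <;> ring

theorem pow_succ_mul_pow_succ_rev (hzE : ↑z * E = q • (E * ↑z)) (j : ℕ) :
    F ^ (j + 1) * E ^ (j + 1) =
      F ^ j * E ^ j *
        (casimir η' q E F z + (η' * q ^ (j + 1)) • (z : A) + (η' * q⁻¹ ^ j) • (↑z⁻¹ : A)) := by
  have hwE : ↑z⁻¹ * E = q⁻¹ • (E * ↑z⁻¹) := Units.inv_mul_eq_smul_mul_inv hq hzE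
  have hFE : F * E - E * F = (η' * (q - 1)) • ((↑z⁻¹⁻¹ : A) - ↑z⁻¹) := by
    rw [inv_inv, ← neg_sub, hEF, ← smul_neg, neg_sub]
  -- the relations are symmetric under `E ↔ F`, `z ↔ z⁻¹`, which fixes the Casimir element
  rw [pow_succ_mul_pow_succ hq hFE hwE, casimir_swap hEF, inv_inv, add_right_comm]

end Casimir

section CasimirFactor

variable {k : Type*} [Field k] {η' q ζ : k} {n : ℕ}

/- The inner variable stands for the Casimir element and the outer one for `z`, with `z⁻¹`
written as `(ζ ^ n)⁻¹ * z ^ (n - 1)`, which is valid once `z ^ n = ζ ^ n`. -/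
noncomputable def casimirFactor (η' q ζ : k) (n i : ℕ) : k[X][X] :=
  C X + C (C (η' * q ^ (i + 1))) * X + C (C (η' * q⁻¹ ^ i * (ζ ^ n)⁻¹)) * X ^ (n - 1)

theorem casimirFactor_comp (hn : n ≠ 0) (hq : q ^ n = 1) (i : ℕ) :
    (casimirFactor η' q ζ n i).comp (C (C q) * X) = casimirFactor η' q ζ n (i + 1) := by
  have hqn : q ^ (n - 1) = q⁻¹ := eq_inv_of_mul_eq_one_left (by rw [pow_sub_one_mul hn, hq])
  simp only [casimirFactor, add_comp, mul_comp, C_comp, X_comp, pow_comp, mul_pow, ← C_pow,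
    ← C_mul, ← mul_assoc, hqn]
  ring_nf

theorem comp_prod_casimirFactor (hn : n ≠ 0) (hq : q ^ n = 1) :
    (∏ i ∈ Finset.range n, casimirFactor η' q ζ n i).comp (C (C q) * X) =
      ∏ i ∈ Finset.range n, casimirFactor η' q ζ n i := by
  rw [prod_comp]
  simp_rw [casimirFactor_comp hn hq]
  refine Finset.prod_range_add_one_of_eq ?_
  simp [casimirFactor, pow_succ, hq]

theorem coeff_prod_casimirFactor_eq_zero (hn : n ≠ 0) (hq : orderOf q = n) {d : ℕ}
    (hd : ¬ n ∣ d) : (∏ i ∈ Finset.range n, casimirFactor η' q ζ n i).coeff d = 0 := by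
  refine coeff_eq_zero_of_comp_C_mul_X_eq_self
    (comp_prod_casimirFactor hn (hq ▸ pow_orderOf_eq_one q)) ?_
  rwa [← C_pow, Ne, ← C_1, C_inj, ← orderOf_dvd_iff_pow_eq_one, hq]

theorem eval_casimirFactor (hn : n ≠ 0) (hζ : ζ ≠ 0) (i : ℕ) :
    (casimirFactor η' q ζ n i).eval (C ζ) = X + C (η' * ((q ^ i * ζ)⁻¹ + q * (q ^ i * ζ))) := by
  have hζn : (ζ ^ n)⁻¹ * ζ ^ (n - 1) = ζ⁻¹ := by
    rw [← pow_sub_one_mul hn, mul_inv, mul_right_comm, inv_mul_cancel₀ (pow_ne_zero _ hζ),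
      one_mul]
  simp only [casimirFactor, eval_add, eval_mul, eval_C, eval_X, eval_pow, ← C_pow, ← C_mul,
    add_assoc, ← C_add]
  congr 2
  simp only [inv_pow, mul_inv]
  linear_combination (η' * (q ^ i)⁻¹) * hζn

variable {A : Type*} [Ring A] [Algebra k A]

theorem eval₂_casimirFactor (hn : n ≠ 0) (hζ : ζ ≠ 0) {z : Aˣ}
    (hz : (z : A) ^ n = algebraMap k A ζ ^ n) (c : A) (i : ℕ) :
    (casimirFactor η' q ζ n i).eval₂ (aeval c).toRingHom z =
      c + (η' * q ^ (i + 1)) • (z : A) + (η' * q⁻¹ ^ i) • (↑z⁻¹ : A) := by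
  have hzn : (z : A) ^ (n - 1) = algebraMap k A (ζ ^ n) * ↑z⁻¹ := by
    rw [map_pow, ← hz, ← pow_sub_one_mul hn, mul_assoc, Units.mul_inv, mul_one]
  rw [casimirFactor, C_mul_X_eq_monomial, C_mul_X_pow_eq_monomial, eval₂_add, eval₂_add,
    eval₂_monomial, eval₂_monomial, eval₂_C, pow_one, hzn]
  simp only [AlgHom.toRingHom_eq_coe, RingHom.coe_coe, aeval_C, aeval_X, Algebra.smul_def,
    ← mul_assoc, ← map_mul, inv_mul_cancel_right₀ (pow_ne_zero n hζ)]

theorem eval₂_prod_casimirFactor (hn : n ≠ 0) (hζ : ζ ≠ 0) {E F : A} {z : Aˣ}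
    (hz : (z : A) ^ n = algebraMap k A ζ ^ n) (hq : q ≠ 0) (hzE : ↑z * E = q • (E * ↑z))
    (hzF : ↑z * F = q⁻¹ • (F * ↑z)) (hEF : E * F - F * E = (η' * (q - 1)) • ((↑z⁻¹ : A) - z))
    (j : ℕ) :
    (∏ i ∈ Finset.range j, casimirFactor η' q ζ n i).eval₂
      (aeval (casimir η' q E F z)).toRingHom z = F ^ j * E ^ j := by
  have hcomm (a : k[X]) : Commute ((aeval (casimir η' q E F z)).toRingHom a) z :=
    (Algebra.commute_of_mem_adjoin_singleton_of_commute (aeval_mem_adjoin_singleton k _)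
      (commute_casimir_of_mul_eq_smul hq hzE hzF (Commute.refl _)).symm).symm
  induction j with
  | zero => simp
  | succ j ih =>
    rw [Finset.prod_range_succ, eval₂_mul_noncomm _ _ fun _ => hcomm _, ih,
      eval₂_casimirFactor hn hζ hz, pow_succ_mul_pow_succ_rev hq hEF hzE, mul_assoc]

theorem aeval_casimir_prod_eq (hn : n ≠ 0) (hq : orderOf q = n) (hζ : ζ ≠ 0) {E F : A}
    {z : Aˣ} (hz : (z : A) ^ n = algebraMap k A ζ ^ n) (hzE : ↑z * E = q • (E * ↑z))
    (hzF : ↑z * F = q⁻¹ • (F * ↑z)) (hEF : E * F - F * E = (η' * (q - 1)) • ((↑z⁻¹ : A) - z)) :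
    aeval (casimir η' q E F z)
      (∏ i ∈ Finset.range n, (X + C (η' * ((q ^ i * ζ)⁻¹ + q * (q ^ i * ζ))))) =
        F ^ n * E ^ n := by
  have hq0 : q ≠ 0 := fun h => hn (by simpa [h] using hq.symm)
  set f : k[X] →+* A := (aeval (casimir η' q E F z)).toRingHom
  calc aeval (casimir η' q E F z)
        (∏ i ∈ Finset.range n, (X + C (η' * ((q ^ i * ζ)⁻¹ + q * (q ^ i * ζ)))))
      = f ((∏ i ∈ Finset.range n, casimirFactor η' q ζ n i).eval (C ζ)) := by
        simp_rw [eval_prod, eval_casimirFactor hn hζ]; rfl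
    _ = (∏ i ∈ Finset.range n, casimirFactor η' q ζ n i).eval₂ f (algebraMap k A ζ) := by
        rw [← eval₂_at_apply]; simp [f]
    _ = (∏ i ∈ Finset.range n, casimirFactor η' q ζ n i).eval₂ f z :=
        (eval₂_eq_eval₂_of_pow_eq f (fun _ => coeff_prod_casimirFactor_eq_zero hn hq) hz).symm
    _ = F ^ n * E ^ n := eval₂_prod_casimirFactor hn hζ hz hq0 hzE hzF hEF n

end CasimirFactor

section DiagonalSpan

variable (k : Type*) {A : Type*} [Field k] [Ring A] [Algebra k A]

def diagonalSpan (E F : A) (K : Aˣ) (j : ℕ) : Submodule k A :=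
  Submodule.span k {y | ∃ i < j, ∃ l : ℤ, y = E ^ i * F ^ i * ↑(K ^ l)}

variable {k} {E F : A} {K : Aˣ}

theorem diagonalSpan_mono : Monotone (diagonalSpan k E F K) := fun _ _ h =>
  Submodule.span_mono fun _ ⟨i, hi, l, hy⟩ => ⟨i, hi.trans_le h, l, hy⟩

theorem mem_diagonalSpan {i j : ℕ} (h : i < j) (l : ℤ) :
    E ^ i * F ^ i * ↑(K ^ l) ∈ diagonalSpan k E F K j :=
  Submodule.subset_span ⟨i, h, l, rfl⟩

theorem pow_mul_pow_mem_diagonalSpan {i j : ℕ} (h : i < j) :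
    E ^ i * F ^ i ∈ diagonalSpan k E F K j := by
  simpa using mem_diagonalSpan (k := k) (E := E) (F := F) (K := K) h 0

theorem mul_zpow_mem_diagonalSpan {y : A} {j : ℕ} (hy : y ∈ diagonalSpan k E F K j) (l : ℤ) :
    y * ↑(K ^ l) ∈ diagonalSpan k E F K j := by
  induction hy using Submodule.span_induction with
  | mem y hy =>
    obtain ⟨i, hi, l', rfl⟩ := hy
    rw [mul_assoc, ← Units.val_mul, ← zpow_add]
    exact mem_diagonalSpan hi _
  | zero => simp
  | add y y' _ _ hy hy' => rw [add_mul]; exact add_mem hy hy'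
  | smul a y _ hy => rw [Algebra.smul_mul_assoc]; exact Submodule.smul_mem _ a hy

theorem mul_mem_diagonalSpan_succ {c : A} (hcK : Commute c K)
    (hstep : ∀ i, E ^ i * F ^ i * c - E ^ (i + 1) * F ^ (i + 1) ∈ diagonalSpan k E F K (i + 1))
    {y : A} {j : ℕ} (hy : y ∈ diagonalSpan k E F K j) :
    y * c ∈ diagonalSpan k E F K (j + 1) := by
  induction hy using Submodule.span_induction with
  | mem y hy =>
    obtain ⟨i, hi, l, rfl⟩ := hy
    have : E ^ i * F ^ i * ↑(K ^ l) * c =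
        (E ^ i * F ^ i * c - E ^ (i + 1) * F ^ (i + 1)) * ↑(K ^ l) +
          E ^ (i + 1) * F ^ (i + 1) * ↑(K ^ l) := by
      rw [mul_assoc _ _ c, ← (hcK.units_zpow_right l).eq]
      noncomm_ring
    rw [this]
    exact add_mem (diagonalSpan_mono (by omega) (mul_zpow_mem_diagonalSpan (hstep i) l))
      (mem_diagonalSpan (by omega) l)
  | zero => simp
  | add y y' _ _ hy hy' => rw [add_mul]; exact add_mem hy hy'
  | smul a y _ hy => rw [Algebra.smul_mul_assoc]; exact Submodule.smul_mem _ a hy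

theorem pow_mul_pow_notMem_diagonalSpan {n N : ℕ} (hN : 0 < N) {κ : kˣ}
    (hK : (K : A) ^ N = (κ : k) • 1)
    (hli : LinearIndependent k
      (fun t : Fin n × Fin n × Fin N => E ^ (t.1 : ℕ) * F ^ (t.2.1 : ℕ) * (K : A) ^ (t.2.2 : ℕ)))
    {d : ℕ} (hd : d < n) : E ^ d * F ^ d ∉ diagonalSpan k E F K d := by
  have hle : diagonalSpan k E F K d ≤ Submodule.span k ((fun t : Fin n × Fin n × Fin N =>
      E ^ (t.1 : ℕ) * F ^ (t.2.1 : ℕ) * (K : A) ^ (t.2.2 : ℕ)) '' {t | (t.1 : ℕ) < d}) := by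
    refine Submodule.span_le.mpr ?_
    rintro _ ⟨i, hi, l, rfl⟩
    obtain ⟨c, r, hr, hl⟩ := Units.exists_val_zpow_eq_smul_pow hN hK l
    rw [hl, Algebra.mul_smul_comm]
    exact Submodule.smul_mem _ c (Submodule.subset_span
      ⟨(⟨i, hi.trans hd⟩, ⟨i, hi.trans hd⟩, ⟨r, hr⟩), hi, rfl⟩)
  intro hmem
  refine hli.notMem_span_image (s := {t | (t.1 : ℕ) < d}) (x := (⟨d, hd⟩, ⟨d, hd⟩, ⟨0, hN⟩))
    (by simp) ?_
  simpa using hle hmem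

theorem aeval_casimir_ne_zero {η' c : k} (hc : c ≠ 0) {m n N : ℕ} (hN : 0 < N) {κ : kˣ}
    (hK : (K : A) ^ N = (κ : k) • 1) (hKE : ↑K * E = c • (E * ↑K))
    (hKF : ↑K * F = c⁻¹ • (F * ↑K))
    (hEF : E * F - F * E = (η' * (c ^ m - 1)) • ((↑(K ^ m)⁻¹ : A) - ↑(K ^ m)))
    (hli : LinearIndependent k
      (fun t : Fin n × Fin n × Fin N => E ^ (t.1 : ℕ) * F ^ (t.2.1 : ℕ) * (K : A) ^ (t.2.2 : ℕ)))
    {g : k[X]} (hg : g ≠ 0) (hdeg : g.natDegree < n) :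
    aeval (casimir η' (c ^ m) E F (K ^ m)) g ≠ 0 := by
  have hzF : ↑(K ^ m) * F = (c ^ m)⁻¹ • (F * ↑(K ^ m)) :=
    inv_pow c m ▸ Units.val_pow_mul_eq_smul_mul hKF m
  have hstep (i : ℕ) :
      E ^ i * F ^ i * casimir η' (c ^ m) E F (K ^ m) - E ^ (i + 1) * F ^ (i + 1) ∈
        diagonalSpan k E F K (i + 1) := by
    have hz : ((K ^ m : Aˣ) : A) = ↑(K ^ (m : ℤ)) := by rw [zpow_natCast]
    have hz' : (↑(K ^ m)⁻¹ : A) = ↑(K ^ (-(m : ℤ))) := by rw [zpow_neg, zpow_natCast]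
    rw [pow_succ_mul_pow_succ (pow_ne_zero m hc) hEF hzF i, mul_add, mul_add,
      sub_add_eq_sub_sub, sub_add_eq_sub_sub, sub_self, zero_sub, sub_eq_add_neg, ← neg_add,
      neg_mem_iff, hz, hz', Algebra.mul_smul_comm, Algebra.mul_smul_comm]
    exact add_mem (Submodule.smul_mem _ _ (mem_diagonalSpan (lt_add_one i) _))
      (Submodule.smul_mem _ _ (mem_diagonalSpan (lt_add_one i) _))
  have hcK : Commute (casimir η' (c ^ m) E F (K ^ m)) K :=
    commute_casimir_of_mul_eq_smul hc hKE hKF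
      (by rw [Units.val_pow_eq_pow_val]; exact (Commute.refl _).pow_right m)
  exact aeval_ne_zero_of_pow_sub_mem diagonalSpan_mono
    (pow_sub_mem_of_mul_sub_mem (x := fun j => E ^ j * F ^ j) (by simp)
      (fun _ _ hy => mul_mem_diagonalSpan_succ hcK hstep hy) hstep)
    (fun _ _ h => pow_mul_pow_mem_diagonalSpan h) hg
    (pow_mul_pow_notMem_diagonalSpan hN hK hli hdeg)

end DiagonalSpan

theorem casimir_minimal_polynomial_general (k : Type*) [Field k]
    (A : Type*) [Ring A] [Algebra k A]
    (n m : ℕ) (hn : 2 ≤ n) (hm : 0 < m)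
    (θ κ : kˣ) (hθ : orderOf θ = n * m)
    (η α β : k)
    (E F : A) (u : Aˣ)
    (hE : E ^ n = α • (1 : A)) (hF : F ^ n = β • (1 : A))
    (hK : ((u : A)) ^ (n * m) = ((κ : kˣ) : k) • (1 : A))
    (hEF : E * F - F * E = η • (((u⁻¹ ^ m : Aˣ) : A) - ((u ^ m : Aˣ) : A)))
    (hKE : (u : A) * E = ((θ : kˣ) : k) • (E * (u : A)))
    (hKF : (u : A) * F = ((θ⁻¹ : kˣ) : k) • (F * (u : A)))
    (hli : LinearIndependent k
      (fun t : Fin n × Fin n × Fin (n * m) =>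
        E ^ (t.1 : ℕ) * F ^ (t.2.1 : ℕ) * ((u : A)) ^ (t.2.2 : ℕ)))
    (ρ : kˣ) (hρ : ρ ^ (n * m) = κ) :
    Polynomial.aeval
        (E * F - (η / (((θ ^ m : kˣ) : k) - 1)) •
          (((u ^ m : Aˣ) : A) + ((θ ^ m : kˣ) : k) • ((u⁻¹ ^ m : Aˣ) : A)))
        ((∏ i ∈ Finset.range n,
            (Polynomial.X + Polynomial.C ((η / (((θ ^ m : kˣ) : k) - 1)) *
              ((((( θ ^ i * ρ)⁻¹ : kˣ) : k)) ^ m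
                + ((θ ^ m : kˣ) : k) * (((θ ^ i * ρ : kˣ) : k)) ^ m))))
          - Polynomial.C (α * β)) = 0 ∧
    ∀ g : Polynomial k, g ≠ 0 → g.degree < n →
      Polynomial.aeval
        (E * F - (η / (((θ ^ m : kˣ) : k) - 1)) •
          (((u ^ m : Aˣ) : A) + ((θ ^ m : kˣ) : k) • ((u⁻¹ ^ m : Aˣ) : A))) g ≠ 0 := by
  rw [Units.val_pow_eq_pow_val θ m]
  set q : k := (θ : k) ^ m
  have hq : orderOf q = n := by
    change orderOf ((θ ^ m : kˣ) : k) = n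
    rw [orderOf_units, orderOf_pow_of_dvd hm.ne' (hθ ▸ dvd_mul_left m n), hθ,
      Nat.mul_div_cancel _ hm]
  have hq1 : q - 1 ≠ 0 := sub_ne_zero.mpr fun h => by rw [h, orderOf_one] at hq; omega
  rw [Units.val_inv_eq_inv_val] at hKF
  have hzF : ↑(u ^ m) * F = q⁻¹ • (F * ↑(u ^ m)) :=
    inv_pow (θ : k) m ▸ Units.val_pow_mul_eq_smul_mul hKF m
  have hEF' : E * F - F * E = (η / (q - 1) * (q - 1)) • ((↑(u ^ m)⁻¹ : A) - ↑(u ^ m)) := by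
    rw [div_mul_cancel₀ _ hq1, ← inv_pow, hEF]
  have hz : (↑(u ^ m) : A) ^ n = algebraMap k A ((ρ : k) ^ m) ^ n := by
    rw [← map_pow, ← pow_mul, ← Units.val_pow_eq_pow_val, ← pow_mul, mul_comm m n,
      Units.val_pow_eq_pow_val, hK, ← Units.val_pow_eq_pow_val, hρ,
      Algebra.algebraMap_eq_smul_one]
  have hfactor (i : ℕ) : (((θ ^ i * ρ)⁻¹ : kˣ) : k) ^ m + q * ((θ ^ i * ρ : kˣ) : k) ^ m
      = (q ^ i * (ρ : k) ^ m)⁻¹ + q * (q ^ i * (ρ : k) ^ m) := by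
    simp only [q, Units.val_inv_eq_inv_val, Units.val_mul, Units.val_pow_eq_pow_val, inv_pow,
      mul_pow, ← pow_mul, mul_comm i m]
  simp_rw [inv_pow, hfactor]
  rw [← casimir]
  refine ⟨?_, fun g hg hdeg => ?_⟩
  · rw [map_sub, aeval_casimir_prod_eq (by omega) hq (pow_ne_zero m ρ.ne_zero) hz
      (Units.val_pow_mul_eq_smul_mul hKE m) hzF hEF', hE, hF, aeval_C,
      Algebra.algebraMap_eq_smul_one, smul_mul_smul_comm, one_mul, mul_comm, sub_self]
  · exact aeval_casimir_ne_zero (κ := κ) θ.ne_zero (Nat.mul_pos (by omega) hm) hK hKE hKF hEF'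
      hli hg ((natDegree_lt_iff_degree_lt hg).mpr hdeg)

/-- Lemma 4.5: the Casimir element `C = EF − (η/(q−1))(K^m + qK^{−m})` of a class
subalgebra of a linked lifting satisfies the degree-`n` polynomial
`f(t) = ∏_{i=0}^{n−1}(t + η'·D(θ^i ρ)) − E^n F^n`, where `η' = η/(q−1)` and
`D(ζ) = ζ^{−m} + qζ^m`, and no nonzero polynomial of degree `< n` annihilates `C`. -/
theorem casimir_minimal_polynomial (k : Type*) [Field k] [IsAlgClosed k] [CharZero k]
    (A : Type*) [Ring A] [Algebra k A]
    (n m : ℕ) (hn : 2 ≤ n) (hm : 0 < m)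
    (θ κ : kˣ) (hθ : orderOf θ = n * m)
    (η α β : k) (hη : η ≠ 0)
    (E F : A) (u : Aˣ)
    (hE : E ^ n = α • (1 : A)) (hF : F ^ n = β • (1 : A))
    (hK : ((u : A)) ^ (n * m) = ((κ : kˣ) : k) • (1 : A))
    (hEF : E * F - F * E = η • (((u⁻¹ ^ m : Aˣ) : A) - ((u ^ m : Aˣ) : A)))
    (hKE : (u : A) * E = ((θ : kˣ) : k) • (E * (u : A)))
    (hKF : (u : A) * F = ((θ⁻¹ : kˣ) : k) • (F * (u : A)))
    (hli : LinearIndependent k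
      (fun t : Fin n × Fin n × Fin (n * m) =>
        E ^ (t.1 : ℕ) * F ^ (t.2.1 : ℕ) * ((u : A)) ^ (t.2.2 : ℕ)))
    (hspan : Submodule.span k
      (Set.range fun t : Fin n × Fin n × Fin (n * m) =>
        E ^ (t.1 : ℕ) * F ^ (t.2.1 : ℕ) * ((u : A)) ^ (t.2.2 : ℕ)) = ⊤)
    (ρ : kˣ) (hρ : ρ ^ (n * m) = κ) :
    Polynomial.aeval
        (E * F - (η / (((θ ^ m : kˣ) : k) - 1)) •
          (((u ^ m : Aˣ) : A) + ((θ ^ m : kˣ) : k) • ((u⁻¹ ^ m : Aˣ) : A)))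
        ((∏ i ∈ Finset.range n,
            (Polynomial.X + Polynomial.C ((η / (((θ ^ m : kˣ) : k) - 1)) *
              ((((( θ ^ i * ρ)⁻¹ : kˣ) : k)) ^ m
                + ((θ ^ m : kˣ) : k) * (((θ ^ i * ρ : kˣ) : k)) ^ m))))
          - Polynomial.C (α * β)) = 0 ∧
    ∀ g : Polynomial k, g ≠ 0 → g.degree < n →
      Polynomial.aeval
        (E * F - (η / (((θ ^ m : kˣ) : k) - 1)) •
          (((u ^ m : Aˣ) : A) + ((θ ^ m : kˣ) : k) • ((u⁻¹ ^ m : Aˣ) : A))) g ≠ 0 :=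
  casimir_minimal_polynomial_general k A n m hn hm θ κ hθ η α β E F u hE hF hK hEF hKE hKF hli ρ hρ
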